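/- arXiv:2311.07010 — 2 statements merged into one kernel-verified Lean document; each statement's English description precedes it below -/
import Mathlib

section
/- Let n ≥ 2 and let A be a random symmetric n×n matrix whose entries A_ij for i ≤ j are independent Bernoulli random variables with arbitrary means R_ij ∈ [0,1] (and A_ji = A_ij), and set R = E[A]. Then the spectral norm satisfies P( ‖A − R‖ ≥ 3√(n log n) ) ≤ 2/n². -/
open MeasureTheory ProbabilityTheory

/-- Spectral (ℓ²-operator) norm of a real matrix. -/
noncomputable def specNorm {V : Type*} [Fintype V] [DecidableEq V]
    (M : Matrix V V ℝ) : ℝ :=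
  ‖LinearMap.toContinuousLinearMap (Matrix.toEuclideanLin M)‖

open Real Matrix Finset

section Aux



section Hoeffding

variable {p : ℝ}

private lemma G_pos (hp0 : 0 ≤ p) (hp1 : p ≤ 1) (t : ℝ) : 0 < 1 - p + p * Real.exp t := by
  rcases lt_or_eq_of_le hp1 with h | h
  · have : 0 ≤ p * Real.exp t := mul_nonneg hp0 (Real.exp_pos t).le
    linarith
  · subst h; simpa using Real.exp_pos t

/-- Hoeffding's lemma, Bernoulli case. -/
lemma bernoulli_mgf_le (hp0 : 0 ≤ p) (hp1 : p ≤ 1) (t : ℝ) :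
    (1 - p) * Real.exp (-t * p) + p * Real.exp (t * (1 - p)) ≤ Real.exp (t ^ 2 / 8) := by
  set G : ℝ → ℝ := fun t => 1 - p + p * Real.exp t with hGdef
  have hG : ∀ t, 0 < G t := G_pos hp0 hp1
  set F : ℝ → ℝ := fun t => t ^ 2 / 8 + t * p - Real.log (G t) with hFdef
  set Fd : ℝ → ℝ := fun t => t / 4 + p - p * Real.exp t / G t with hFddef
  have hGd : ∀ t, HasDerivAt G (p * Real.exp t) t := by
    intro t
    exact ((Real.hasDerivAt_exp t).const_mul p).const_add (1 - p)
  have hFd : ∀ t, HasDerivAt F (Fd t) t := by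
    intro t
    have h1 : HasDerivAt (fun t : ℝ => t ^ 2 / 8 + t * p) (t / 4 + p) t := by
      have := ((hasDerivAt_pow 2 t).div_const 8).add ((hasDerivAt_id t).mul_const p)
      exact this.congr_deriv (by ring)
    have h2 : HasDerivAt (fun t => Real.log (G t)) (p * Real.exp t / G t) t :=
      (hGd t).log (hG t).ne'
    exact h1.sub h2
  have hFdd : ∀ t, HasDerivAt Fd
      (1 / 4 - (p * Real.exp t * G t - p * Real.exp t * (p * Real.exp t)) / (G t) ^ 2) t := by
    intro t
    have h1 : HasDerivAt (fun t : ℝ => t / 4 + p) (1 / 4) t := by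
      simpa using ((hasDerivAt_id t).div_const 4).add_const p
    have h2 : HasDerivAt (fun t => p * Real.exp t / G t)
        ((p * Real.exp t * G t - p * Real.exp t * (p * Real.exp t)) / (G t) ^ 2) t :=
      ((Real.hasDerivAt_exp t).const_mul p).div (hGd t) (hG t).ne'
    exact h1.sub h2
  have hFdd_nonneg : ∀ t, 0 ≤ 1 / 4 -
      (p * Real.exp t * G t - p * Real.exp t * (p * Real.exp t)) / (G t) ^ 2 := by
    intro t
    have hG2 : 0 < (G t) ^ 2 := pow_pos (hG t) 2
    rw [sub_nonneg, div_le_iff₀ hG2]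
    have hab : p * Real.exp t * G t - p * Real.exp t * (p * Real.exp t)
        = (p * Real.exp t) * (1 - p) := by simp only [hGdef]; ring
    rw [hab]
    nlinarith [sq_nonneg ((1 - p) - p * Real.exp t), mul_nonneg hp0 (Real.exp_pos t).le,
      sub_nonneg.mpr hp1]
  have hFdMono : Monotone Fd := by
    apply monotone_of_deriv_nonneg
    · exact fun t => (hFdd t).differentiableAt
    · intro t
      rw [(hFdd t).deriv]
      exact hFdd_nonneg t
  have hFd0 : Fd 0 = 0 := by simp [hFddef, hGdef]
  have hF0 : F 0 = 0 := by simp [hFdef, hGdef]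
  have hFnonneg : ∀ t, 0 ≤ F t := by
    intro t
    rcases le_total 0 t with h | h
    · have hmono : MonotoneOn F (Set.Ici (0:ℝ)) := by
        apply monotoneOn_of_deriv_nonneg (convex_Ici 0)
          (fun x _ => (hFd x).differentiableAt.continuousAt.continuousWithinAt)
          (fun x _ => (hFd x).differentiableAt.differentiableWithinAt)
        intro x hx
        rw [(hFd x).deriv]
        rw [interior_Ici] at hx
        have := hFdMono (le_of_lt hx)
        rw [hFd0] at this
        exact this
      have := hmono (Set.self_mem_Ici) (Set.mem_Ici.2 h) h
      rwa [hF0] at this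
    · have hanti : AntitoneOn F (Set.Iic (0:ℝ)) := by
        apply antitoneOn_of_deriv_nonpos (convex_Iic 0)
          (fun x _ => (hFd x).differentiableAt.continuousAt.continuousWithinAt)
          (fun x _ => (hFd x).differentiableAt.differentiableWithinAt)
        intro x hx
        rw [(hFd x).deriv]
        rw [interior_Iic] at hx
        have := hFdMono (le_of_lt hx)
        rw [hFd0] at this
        exact this
      have := hanti (Set.mem_Iic.2 h) (Set.self_mem_Iic) h
      rwa [hF0] at this
  -- conclude
  have hlog : Real.log (G t) ≤ t ^ 2 / 8 + t * p := by
    have := hFnonneg t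
    simp only [hFdef] at this
    linarith
  have hGle : G t ≤ Real.exp (t ^ 2 / 8 + t * p) := by
    calc G t = Real.exp (Real.log (G t)) := (Real.exp_log (hG t)).symm
    _ ≤ _ := Real.exp_le_exp.2 hlog
  calc (1 - p) * Real.exp (-t * p) + p * Real.exp (t * (1 - p))
      = Real.exp (-(t * p)) * G t := by
        simp only [hGdef]
        rw [show t * (1 - p) = -(t*p) + t by ring, Real.exp_add, show -t*p = -(t*p) by ring]
        ring
    _ ≤ Real.exp (-(t * p)) * Real.exp (t ^ 2 / 8 + t * p) :=
        mul_le_mul_of_nonneg_left hGle (Real.exp_pos _).le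
    _ = Real.exp (t ^ 2 / 8) := by rw [← Real.exp_add]; ring_nf

end Hoeffding


section Prob
variable {Ω : Type*} [MeasurableSpace Ω] {P : Measure Ω} [IsProbabilityMeasure P]


variable {Ω : Type*} [MeasurableSpace Ω] {P : Measure Ω} [IsProbabilityMeasure P]

lemma bern_integral (B : Ω → ℝ) (hB : Measurable B) (h01 : ∀ ω, B ω = 0 ∨ B ω = 1)
    {p : ℝ} (hp0 : 0 ≤ p) (hmean : P {ω | B ω = 1} = ENNReal.ofReal p) (g : ℝ → ℝ) :
    Integrable (fun ω => g (B ω)) P ∧ ∫ ω, g (B ω) ∂P = (1 - p) * g 0 + p * g 1 := by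
  have hS : MeasurableSet {ω | B ω = 1} := hB (measurableSet_singleton 1)
  have heq : (fun ω => g (B ω)) =
      fun ω => g 0 + (g 1 - g 0) * Set.indicator {ω | B ω = 1} (fun _ => (1:ℝ)) ω := by
    funext ω
    rcases h01 ω with h | h
    · have : ω ∉ {ω | B ω = 1} := by simp [Set.mem_setOf_eq, h]
      simp [h, Set.indicator_of_notMem this]
    · have : ω ∈ {ω | B ω = 1} := by simp [Set.mem_setOf_eq, h]
      simp [h, Set.indicator_of_mem this]
  have hint : Integrable (fun ω => Set.indicator {ω | B ω = 1} (fun _ => (1:ℝ)) ω) P := by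
    rw [integrable_indicator_iff hS]
    exact (integrable_const 1).integrableOn
  have hPS : (P {ω | B ω = 1}).toReal = p := by rw [hmean, ENNReal.toReal_ofReal hp0]
  constructor
  · rw [heq]
    exact (integrable_const (g 0)).add (hint.const_mul _)
  · rw [heq]
    rw [integral_add (integrable_const _) (hint.const_mul _), integral_const]
    rw [integral_const_mul, integral_indicator_const _ hS]
    simp [hPS]
    rw [show P.real {ω | B ω = 1} = p from hPS]
    ring



lemma bern_scaled_mgf (B : Ω → ℝ) (hB : Measurable B) (h01 : ∀ ω, B ω = 0 ∨ B ω = 1)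
    {p : ℝ} (hp0 : 0 ≤ p) (hp1 : p ≤ 1) (hmean : P {ω | B ω = 1} = ENNReal.ofReal p)
    (c t : ℝ) :
    Integrable (fun ω => Real.exp (t * (c * (B ω - p)))) P ∧
    mgf (fun ω => c * (B ω - p)) P t ≤ Real.exp ((c * t) ^ 2 / 8) := by
  obtain ⟨hint, hval⟩ := bern_integral B hB h01 hp0 hmean (fun a => Real.exp (t * (c * (a - p))))
  refine ⟨hint, ?_⟩
  have : mgf (fun ω => c * (B ω - p)) P t = ∫ ω, Real.exp (t * (c * (B ω - p))) ∂P := rfl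
  rw [this, hval]
  have := bernoulli_mgf_le hp0 hp1 (t * c)
  calc (1 - p) * Real.exp (t * (c * (0 - p))) + p * Real.exp (t * (c * (1 - p)))
      = (1 - p) * Real.exp (-(t * c) * p) + p * Real.exp ((t * c) * (1 - p)) := by ring_nf
    _ ≤ Real.exp ((t * c) ^ 2 / 8) := this
    _ = Real.exp ((c * t) ^ 2 / 8) := by ring_nf

lemma chernoff_sum {ι : Type*} [Fintype ι] (X : ι → Ω → ℝ) (c : ι → ℝ)
    (hindep : iIndepFun X P)
    (hmeas : ∀ i, Measurable (X i))
    (hmgf : ∀ i t, Integrable (fun ω => Real.exp (t * X i ω)) P ∧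
      mgf (X i) P t ≤ Real.exp ((c i * t) ^ 2 / 8))
    {B s : ℝ} (hB : 0 < B) (hcB : ∑ i, (c i) ^ 2 ≤ B) (hs : 0 ≤ s) :
    P {ω | s ≤ ∑ i, X i ω} ≤ ENNReal.ofReal (Real.exp (-(2 * s ^ 2 / B))) := by
  set t : ℝ := 4 * s / B with ht_def
  have ht : 0 ≤ t := by positivity
  have hint : Integrable (fun ω => Real.exp (t * (∑ i, X i) ω)) P :=
    hindep.integrable_exp_mul_sum hmeas (fun i _ => (hmgf i t).1)
  have hmgfsum : mgf (∑ i, X i) P t ≤ Real.exp (t ^ 2 * B / 8) := by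
    rw [hindep.mgf_sum hmeas]
    calc ∏ i, mgf (X i) P t ≤ ∏ i, Real.exp ((c i * t) ^ 2 / 8) :=
          Finset.prod_le_prod (fun i _ => mgf_nonneg) (fun i _ => (hmgf i t).2)
      _ = Real.exp (∑ i, (c i * t) ^ 2 / 8) := by rw [Real.exp_sum]
      _ ≤ Real.exp (t ^ 2 * B / 8) := by
          apply Real.exp_le_exp.2
          have : ∑ i, (c i * t) ^ 2 / 8 = (∑ i, (c i) ^ 2) * t ^ 2 / 8 := by
            rw [Finset.sum_mul, Finset.sum_div]
            exact Finset.sum_congr rfl (fun i _ => by ring)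
          rw [this]
          have h2 : (0:ℝ) ≤ t ^ 2 / 8 := by positivity
          calc (∑ i, (c i) ^ 2) * t ^ 2 / 8 = (∑ i, (c i) ^ 2) * (t ^ 2 / 8) := by ring
            _ ≤ B * (t ^ 2 / 8) := mul_le_mul_of_nonneg_right hcB h2
            _ = t ^ 2 * B / 8 := by ring
  have hchern := measure_ge_le_exp_mul_mgf (μ := P) (X := ∑ i, X i) s ht hint
  have hkey : (P {ω | s ≤ (∑ i, X i) ω}).toReal ≤ Real.exp (-(2 * s ^ 2 / B)) := by
    calc (P {ω | s ≤ (∑ i, X i) ω}).toReal ≤ Real.exp (-t * s) * mgf (∑ i, X i) P t := hchern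
      _ ≤ Real.exp (-t * s) * Real.exp (t ^ 2 * B / 8) :=
          mul_le_mul_of_nonneg_left hmgfsum (Real.exp_pos _).le
      _ = Real.exp (-t * s + t ^ 2 * B / 8) := (Real.exp_add _ _).symm
      _ = Real.exp (-(2 * s ^ 2 / B)) := by
          congr 1
          rw [ht_def]
          field_simp
          ring
  have hset : {ω | s ≤ ∑ i, X i ω} = {ω | s ≤ (∑ i, X i) ω} := by
    congr with ω
    simp [Finset.sum_apply]
  rw [hset]
  calc P {ω | s ≤ (∑ i, X i) ω}
      = ENNReal.ofReal (P {ω | s ≤ (∑ i, X i) ω}).toReal := by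
        rw [ENNReal.ofReal_toReal (measure_ne_top _ _)]
    _ ≤ ENNReal.ofReal (Real.exp (-(2 * s ^ 2 / B))) := ENNReal.ofReal_le_ofReal hkey

end Prob


variable {n : ℕ}

lemma sum_pairs (f : Fin n → Fin n → ℝ) (hf : ∀ i j, f j i = f i j) :
    ∑ i, ∑ j, f i j =
      ∑ p ∈ Finset.univ.filter (fun p : Fin n × Fin n => p.1 ≤ p.2),
        (if p.1 = p.2 then f p.1 p.1 else 2 * f p.1 p.2) := by
  have hsplit : ∑ i, ∑ j, f i j = ∑ p : Fin n × Fin n, f p.1 p.2 := by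
    rw [← Finset.sum_product']
    rfl
  rw [hsplit]
  rw [← Finset.sum_filter_add_sum_filter_not Finset.univ (fun p : Fin n × Fin n => p.1 ≤ p.2)]
  have hswap : ∑ p ∈ Finset.univ.filter (fun p : Fin n × Fin n => ¬ p.1 ≤ p.2), f p.1 p.2
      = ∑ p ∈ Finset.univ.filter (fun p : Fin n × Fin n => p.1 < p.2), f p.1 p.2 := by
    apply Finset.sum_nbij' (fun p => Prod.swap p) (fun p => Prod.swap p)
    · intro a ha
      simp only [Finset.mem_filter, Finset.mem_univ, true_and, not_le] at ha ⊢
      exact ha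
    · intro a ha
      simp only [Finset.mem_filter, Finset.mem_univ, true_and, not_le] at ha ⊢
      exact ha
    · intro a _; simp
    · intro a _; simp
    · intro a ha
      simp only [Prod.fst_swap, Prod.snd_swap]
      exact hf a.2 a.1
  rw [hswap]
  have hlt_le : Finset.univ.filter (fun p : Fin n × Fin n => p.1 < p.2)
      = (Finset.univ.filter (fun p : Fin n × Fin n => p.1 ≤ p.2)).filter
          (fun p => ¬ p.1 = p.2) := by
    ext p
    simp only [Finset.mem_filter, Finset.mem_univ, true_and]
    constructor
    · intro h; exact ⟨h.le, h.ne⟩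
    · intro ⟨h1, h2⟩; exact lt_of_le_of_ne h1 h2
  rw [hlt_le]
  have h2 : ∑ p ∈ (Finset.univ.filter (fun p : Fin n × Fin n => p.1 ≤ p.2)).filter
        (fun p => ¬ p.1 = p.2), f p.1 p.2
      = ∑ p ∈ Finset.univ.filter (fun p : Fin n × Fin n => p.1 ≤ p.2),
          if ¬ p.1 = p.2 then f p.1 p.2 else 0 := Finset.sum_filter _ _
  rw [h2, ← Finset.sum_add_distrib]
  apply Finset.sum_congr rfl
  intro p hp
  by_cases h : p.1 = p.2
  · simp [h]
  · simp only [h, not_false_iff, if_true, if_false]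
    ring




variable {n : ℕ}

lemma specNorm_le_bound (N : Matrix (Fin n) (Fin n) ℝ) {C : ℝ} (hC : 0 ≤ C)
    (h : ∀ v : EuclideanSpace ℝ (Fin n), ‖Matrix.toEuclideanLin N v‖ ≤ C * ‖v‖) :
    specNorm N ≤ C := by
  apply ContinuousLinearMap.opNorm_le_bound _ hC
  intro v
  simpa using h v

lemma norm_toEuclideanLin_le (N : Matrix (Fin n) (Fin n) ℝ) (v : EuclideanSpace ℝ (Fin n)) :
    ‖Matrix.toEuclideanLin N v‖ ≤ specNorm N * ‖v‖ := by
  exact ContinuousLinearMap.le_opNorm (LinearMap.toContinuousLinearMap (Matrix.toEuclideanLin N)) v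

lemma spec_exists_unit (hn : 0 < n) (N : Matrix (Fin n) (Fin n) ℝ) (hN : N.IsHermitian) :
    ∃ v : EuclideanSpace ℝ (Fin n), ‖v‖ = 1 ∧
      specNorm N ≤ |(inner ℝ v (Matrix.toEuclideanLin N v) : ℝ)| := by
  haveI : Nonempty (Fin n) := ⟨⟨0, hn⟩⟩
  set B := hN.eigenvectorBasis with hB
  set lam := hN.eigenvalues with hlam
  obtain ⟨i0, -, hmax⟩ := Finset.exists_max_image Finset.univ (fun i => |lam i|)
    ⟨Classical.arbitrary _, Finset.mem_univ _⟩
  have hsymm : (Matrix.toEuclideanLin N).IsSymmetric :=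
    Matrix.isHermitian_iff_isSymmetric.mp hN
  -- eigen equation in EuclideanSpace
  have heig : ∀ i, Matrix.toEuclideanLin N (B i) = lam i • B i := by
    intro i
    have hmul := hN.mulVec_eigenvectorBasis i
    apply (WithLp.equiv 2 (Fin n → ℝ)).injective
    rw [Matrix.toEuclideanLin_apply]
    simp only [WithLp.equiv_apply]
    rw [hmul]
    rfl
  have hrepr : ∀ (x : EuclideanSpace ℝ (Fin n)) i,
      B.repr (Matrix.toEuclideanLin N x) i = lam i * B.repr x i := by
    intro x i
    rw [B.repr_apply_apply, B.repr_apply_apply]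
    have h1 : (inner ℝ (B i) (Matrix.toEuclideanLin N x) : ℝ)
        = inner ℝ (Matrix.toEuclideanLin N (B i)) x := (hsymm (B i) x).symm
    rw [h1, heig i, real_inner_smul_left]
  have hnormsq : ∀ (y : EuclideanSpace ℝ (Fin n)), ‖y‖ ^ 2 = ∑ i, (B.repr y i) ^ 2 := by
    intro y
    have h1 : ‖y‖ = ‖B.repr y‖ := (B.repr.norm_map y).symm
    rw [h1, EuclideanSpace.norm_eq]
    rw [Real.sq_sqrt (by positivity)]
    simp [sq_abs]
  have hbound : ∀ x : EuclideanSpace ℝ (Fin n),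
      ‖Matrix.toEuclideanLin N x‖ ≤ |lam i0| * ‖x‖ := by
    intro x
    have h1 : ‖Matrix.toEuclideanLin N x‖ ^ 2 ≤ (|lam i0| * ‖x‖) ^ 2 := by
      rw [hnormsq, mul_pow, hnormsq]
      calc ∑ i, (B.repr (Matrix.toEuclideanLin N x) i) ^ 2
          = ∑ i, (lam i) ^ 2 * (B.repr x i) ^ 2 := by
            apply Finset.sum_congr rfl; intro i _; rw [hrepr]; ring
        _ ≤ ∑ i, |lam i0| ^ 2 * (B.repr x i) ^ 2 := by
            apply Finset.sum_le_sum; intro i _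
            have := hmax i (Finset.mem_univ i)
            have h2 : (lam i)^2 ≤ |lam i0|^2 := by
              rw [← sq_abs (lam i)]
              exact pow_le_pow_left₀ (abs_nonneg _) this 2
            exact mul_le_mul_of_nonneg_right h2 (sq_nonneg _)
        _ = |lam i0| ^ 2 * ∑ i, (B.repr x i) ^ 2 := by rw [Finset.mul_sum]
    have h0 : (0:ℝ) ≤ |lam i0| * ‖x‖ := by positivity
    calc ‖Matrix.toEuclideanLin N x‖ = Real.sqrt (‖Matrix.toEuclideanLin N x‖ ^ 2) :=
          (Real.sqrt_sq (norm_nonneg _)).symm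
      _ ≤ Real.sqrt ((|lam i0| * ‖x‖) ^ 2) := Real.sqrt_le_sqrt h1
      _ = |lam i0| * ‖x‖ := Real.sqrt_sq h0
  refine ⟨B i0, B.orthonormal.1 i0, ?_⟩
  have hinner : (inner ℝ (B i0) (Matrix.toEuclideanLin N (B i0)) : ℝ) = lam i0 := by
    rw [heig i0, real_inner_smul_right]
    have : (inner ℝ (B i0) (B i0) : ℝ) = 1 := by
      rw [real_inner_self_eq_norm_sq, B.orthonormal.1 i0]; norm_num
    rw [this, mul_one]
  rw [hinner]
  exact specNorm_le_bound N (abs_nonneg _) hbound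




variable {n : ℕ}

def wt (x : Fin n → ℝ) (q : Fin n × Fin n) : ℝ :=
  if q.1 = q.2 then x q.1 * x q.1 else 2 * (x q.1 * x q.2)

lemma euc_norm_eq (x : Fin n → ℝ) :
    ‖(WithLp.equiv 2 (Fin n → ℝ)).symm x‖ = Real.sqrt (∑ i, x i ^ 2) := by
  rw [EuclideanSpace.norm_eq]
  congr 1
  apply Finset.sum_congr rfl
  intro i _
  rw [Real.norm_eq_abs, sq_abs]
  rfl

lemma euc_inner_eq (x y : Fin n → ℝ) :
    (inner ℝ ((WithLp.equiv 2 (Fin n → ℝ)).symm x) ((WithLp.equiv 2 (Fin n → ℝ)).symm y) : ℝ)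
      = ∑ i, x i * y i := by
  rw [PiLp.inner_apply]
  apply Finset.sum_congr rfl
  intro i _
  rw [RCLike.inner_apply', conj_trivial]
  rfl

lemma quad_form_eq (N : Matrix (Fin n) (Fin n) ℝ) (hNsym : ∀ i j, N j i = N i j)
    (x : Fin n → ℝ) :
    (inner ℝ ((WithLp.equiv 2 (Fin n → ℝ)).symm x)
      (Matrix.toEuclideanLin N ((WithLp.equiv 2 (Fin n → ℝ)).symm x)) : ℝ)
      = ∑ q : {q : Fin n × Fin n // q.1 ≤ q.2}, wt x q.1 * N q.1.1 q.1.2 := by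
  have h1 : (inner ℝ ((WithLp.equiv 2 (Fin n → ℝ)).symm x)
      (Matrix.toEuclideanLin N ((WithLp.equiv 2 (Fin n → ℝ)).symm x)) : ℝ)
      = ∑ i, x i * (N *ᵥ x) i := by
    rw [Matrix.toEuclideanLin_apply]
    simp only [WithLp.equiv_symm_apply]
    exact euc_inner_eq x (N *ᵥ x)
  rw [h1]
  have h2 : ∑ i, x i * (N *ᵥ x) i = ∑ i, ∑ j, x i * x j * N i j := by
    apply Finset.sum_congr rfl
    intro i _
    rw [Matrix.mulVec, dotProduct, Finset.mul_sum]
    apply Finset.sum_congr rfl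
    intro j _
    ring
  rw [h2, sum_pairs (fun i j => x i * x j * N i j)
    (fun i j => by show x j * x i * N j i = x i * x j * N i j; rw [hNsym]; ring)]
  rw [← Finset.sum_subtype (Finset.univ.filter (fun p : Fin n × Fin n => p.1 ≤ p.2))
    (fun q => by simp) (fun q => wt x q * N q.1 q.2)]
  apply Finset.sum_congr rfl
  intro q hq
  by_cases h : q.1 = q.2
  · simp only [wt, h, if_true]
  · simp only [wt, h, if_false]
    ring

lemma wt_sq_le (x : Fin n → ℝ) :
    ∑ q : {q : Fin n × Fin n // q.1 ≤ q.2}, (wt x q.1) ^ 2 ≤ 2 * (∑ i, x i ^ 2) ^ 2 := by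
  have h1 : 2 * (∑ i, x i ^ 2) ^ 2 = ∑ i, ∑ j, 2 * (x i ^ 2 * x j ^ 2) := by
    rw [sq, Finset.sum_mul_sum, Finset.mul_sum]
    exact Finset.sum_congr rfl fun i _ => by rw [Finset.mul_sum]
  rw [h1, sum_pairs (fun i j => 2 * (x i ^ 2 * x j ^ 2)) (fun i j => by ring)]
  rw [← Finset.sum_subtype (Finset.univ.filter (fun p : Fin n × Fin n => p.1 ≤ p.2))
    (fun q => by simp) (fun q => (wt x q) ^ 2)]
  apply Finset.sum_le_sum
  intro q hq
  by_cases h : q.1 = q.2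
  · simp only [wt, h, if_true]
    rw [← h]
    nlinarith [sq_nonneg (x q.1), sq_nonneg (x q.1 * x q.1)]
  · simp only [wt, h, if_false]
    nlinarith [sq_nonneg (x q.1 * x q.2)]

lemma specNorm_le_card (N : Matrix (Fin n) (Fin n) ℝ) (hent : ∀ i j, |N i j| ≤ 1) :
    specNorm N ≤ n := by
  apply ContinuousLinearMap.opNorm_le_bound _ (Nat.cast_nonneg n)
  intro v
  show ‖Matrix.toEuclideanLin N v‖ ≤ n * ‖v‖
  set w : Fin n → ℝ := fun i => v i with hw
  have hvw : ‖v‖ = Real.sqrt (∑ i, w i ^ 2) := by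
    rw [EuclideanSpace.norm_eq]
    congr 1
    exact Finset.sum_congr rfl (fun i _ => by rw [Real.norm_eq_abs, sq_abs])
  have happ : ∀ i, (Matrix.toEuclideanLin N v) i = ∑ j, N i j * w j := by
    intro i
    rfl
  have hnorm : ‖Matrix.toEuclideanLin N v‖ = Real.sqrt (∑ i, (∑ j, N i j * w j) ^ 2) := by
    rw [EuclideanSpace.norm_eq]
    congr 1
    exact Finset.sum_congr rfl (fun i _ => by rw [Real.norm_eq_abs, sq_abs, happ])
  rw [hnorm, hvw]
  have hrow : ∀ i : Fin n, (∑ j, N i j * w j) ^ 2 ≤ (n : ℝ) * ∑ j, w j ^ 2 := by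
    intro i
    calc (∑ j, N i j * w j) ^ 2 ≤ (∑ j, (N i j) ^ 2) * (∑ j, w j ^ 2) :=
          Finset.sum_mul_sq_le_sq_mul_sq Finset.univ _ _
      _ ≤ (n : ℝ) * ∑ j, w j ^ 2 := by
          apply mul_le_mul_of_nonneg_right _ (by positivity)
          calc ∑ j, (N i j) ^ 2 ≤ ∑ _j : Fin n, (1:ℝ) := by
                apply Finset.sum_le_sum
                intro j _
                nlinarith [sq_abs (N i j), abs_nonneg (N i j), hent i j]
            _ = n := by simp
  calc Real.sqrt (∑ i, (∑ j, N i j * w j) ^ 2)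
      ≤ Real.sqrt (∑ _i : Fin n, (n:ℝ) * ∑ j, w j ^ 2) :=
        Real.sqrt_le_sqrt (Finset.sum_le_sum (fun i _ => hrow i))
    _ = Real.sqrt ((n:ℝ)^2 * ∑ j, w j ^ 2) := by
        rw [Finset.sum_const, Finset.card_univ, Fintype.card_fin, nsmul_eq_mul]
        ring_nf
    _ = n * Real.sqrt (∑ j, w j ^ 2) := by
        rw [Real.sqrt_mul (by positivity), Real.sqrt_sq (by positivity)]



lemma log30_gt : (10:ℝ)/3 < Real.log 30 := by
  rw [Real.lt_log_iff_exp_lt (by norm_num : (0:ℝ) < 30)]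
  have h3 : Real.exp (10/3) ^ 3 = Real.exp 10 := by
    rw [← Real.exp_nat_mul]
    norm_num
  have h10 : Real.exp 10 < 27000 := by
    have h1 : Real.exp 1 < 2.7182818286 := Real.exp_one_lt_d9
    have h2 : Real.exp 10 = (Real.exp 1) ^ 10 := by
      rw [← Real.exp_nat_mul]; norm_num
    rw [h2]
    calc (Real.exp 1) ^ 10 < 2.7182818286 ^ 10 := by
          apply pow_lt_pow_left₀ h1 (Real.exp_pos 1).le
          norm_num
      _ < 27000 := by norm_num
  by_contra h
  push_neg at h
  have h30 : (30:ℝ)^3 ≤ Real.exp (10/3) ^ 3 := pow_le_pow_left₀ (by norm_num) h 3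
  rw [h3] at h30
  norm_num at h30
  linarith

lemma nine_log (n : ℕ) (h2 : 2 ≤ n) (h30 : n ≤ 30) : (n:ℝ) < 9 * Real.log n := by
  set x : ℝ := (n:ℝ) with hx
  have hx2 : (2:ℝ) ≤ x := by rw [hx]; exact_mod_cast h2
  have hx30 : x ≤ 30 := by rw [hx]; exact_mod_cast h30
  set a : ℝ := (30 - x)/28 with ha_def
  set b : ℝ := (x - 2)/28 with hb_def
  have ha : 0 ≤ a := by rw [ha_def]; linarith
  have hb : 0 ≤ b := by rw [hb_def]; linarith
  have hab : a + b = 1 := by rw [ha_def, hb_def]; ring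
  have hcomb : a * 2 + b * 30 = x := by rw [ha_def, hb_def]; ring
  have hconc := (strictConcaveOn_log_Ioi.concaveOn).2 (Set.mem_Ioi.2 (by norm_num : (0:ℝ) < 2))
    (Set.mem_Ioi.2 (by norm_num : (0:ℝ) < 30)) ha hb hab
  simp only [smul_eq_mul] at hconc
  rw [hcomb] at hconc
  have hlog2 : 0.6931471803 < Real.log 2 := Real.log_two_gt_d9
  have hlog30 := log30_gt
  rcases eq_or_lt_of_le hb with hb0 | hbpos
  · have hb' : (x - 2)/28 = 0 := by rw [← hb_def, ← hb0]
    have hx_eq : x = 2 := by linarith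
    rw [hx_eq]
    nlinarith
  · have h1 : a * Real.log 2 ≥ a * (2/9) := by
      apply mul_le_mul_of_nonneg_left _ ha
      linarith
    have h2' : b * Real.log 30 > b * (30/9) := by
      apply mul_lt_mul_of_pos_left _ hbpos
      linarith
    nlinarith

lemma log17_le : Real.log 17 ≤ 3.466 := by
  have h1 : Real.log 17 ≤ Real.log 32 := Real.log_le_log (by norm_num) (by norm_num)
  have h2 : Real.log 32 = 5 * Real.log 2 := by
    rw [show (32:ℝ) = 2 ^ 5 by norm_num, Real.log_pow]
    norm_num
  have h3 : Real.log 2 < 0.6931471808 := Real.log_two_lt_d9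
  nlinarith

lemma log_ge_of_31 (n : ℕ) (hn : 31 ≤ n) : 2.772 ≤ Real.log n := by
  have h1 : Real.log 16 ≤ Real.log n := by
    apply Real.log_le_log (by norm_num)
    have : (31:ℝ) ≤ n := by exact_mod_cast hn
    linarith
  have h2 : Real.log 16 = 4 * Real.log 2 := by
    rw [show (16:ℝ) = 2 ^ 4 by norm_num, Real.log_pow]
    norm_num
  have h3 : 0.6931471803 < Real.log 2 := Real.log_two_gt_d9
  nlinarith

lemma final_num (n : ℕ) (hn : 31 ≤ n) :
    ((2 * (⌈8 * Real.sqrt n⌉ : ℤ) + 1 : ℝ)) ^ n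
      * Real.exp (-((19881/6561) * ((n:ℝ) * Real.log n))) ≤ 1/(n:ℝ)^2 := by
  have hnR : (31:ℝ) ≤ (n:ℝ) := by exact_mod_cast hn
  have hnpos : (0:ℝ) < n := by linarith
  have hsq : (3:ℝ) ≤ Real.sqrt n := by
    rw [show (3:ℝ) = Real.sqrt 9 by rw [show (9:ℝ) = 3^2 by norm_num, Real.sqrt_sq]; norm_num]
    exact Real.sqrt_le_sqrt (by linarith)
  have hsqpos : (0:ℝ) < Real.sqrt n := by linarith
  have hceil : ((⌈8 * Real.sqrt n⌉ : ℤ) : ℝ) ≤ 8 * Real.sqrt n + 1 := by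
    have := Int.ceil_lt_add_one (8 * Real.sqrt n)
    linarith
  have hc17 : ((2 * (⌈8 * Real.sqrt n⌉ : ℤ) + 1 : ℝ)) ≤ 17 * Real.sqrt n := by
    push_cast
    nlinarith
  have hcpos : (0:ℝ) ≤ ((2 * (⌈8 * Real.sqrt n⌉ : ℤ) + 1 : ℝ)) := by
    have h0 : (0:ℤ) ≤ ⌈8 * Real.sqrt n⌉ := Int.ceil_nonneg (by positivity)
    have h0' : (0:ℝ) ≤ ((⌈8 * Real.sqrt n⌉ : ℤ) : ℝ) := by exact_mod_cast h0
    linarith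
  have hL : 2.772 ≤ Real.log n := log_ge_of_31 n hn
  have hLpos : 0 < Real.log n := by linarith
  set L := Real.log n with hLdef
  -- key exponent inequality
  have hkey : (n:ℝ) * Real.log (17 * Real.sqrt n) + 2 * L ≤ (19881/6561) * ((n:ℝ) * L) := by
    have hlog : Real.log (17 * Real.sqrt n) = Real.log 17 + L / 2 := by
      rw [Real.log_mul (by norm_num) (ne_of_gt hsqpos), Real.log_sqrt hnpos.le]
    rw [hlog]
    have h17 := log17_le
    have h1 : (n:ℝ) * Real.log 17 ≤ (n:ℝ) * 3.466 := by
      apply mul_le_mul_of_nonneg_left h17 (by linarith)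
    have h2 : (3.466:ℝ) ≤ 1.26 * L := by nlinarith
    have h3 : (n:ℝ) * 3.466 ≤ 1.26 * ((n:ℝ) * L) := by nlinarith
    have h4 : 2 * L ≤ (n:ℝ)/2 * L := by nlinarith
    nlinarith [mul_pos hnpos hLpos]
  -- convert to exponentials
  calc ((2 * (⌈8 * Real.sqrt n⌉ : ℤ) + 1 : ℝ)) ^ n
        * Real.exp (-((19881/6561) * ((n:ℝ) * L)))
      ≤ (17 * Real.sqrt n) ^ n * Real.exp (-((19881/6561) * ((n:ℝ) * L))) := by
        apply mul_le_mul_of_nonneg_right _ (Real.exp_pos _).le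
        exact pow_le_pow_left₀ hcpos hc17 n
    _ = Real.exp ((n:ℝ) * Real.log (17 * Real.sqrt n) + (-((19881/6561) * ((n:ℝ) * L)))) := by
        rw [Real.exp_add]
        congr 1
        rw [← Real.log_pow, Real.exp_log (by positivity)]
    _ ≤ Real.exp (-(2 * L)) := by
        apply Real.exp_le_exp.2
        linarith
    _ = 1/(n:ℝ)^2 := by
        rw [Real.exp_neg]
        rw [show (2:ℝ) * L = Real.log ((n:ℝ)^2) by rw [Real.log_pow]; push_cast; ring]
        rw [Real.exp_log (by positivity)]
        rw [one_div]



section NetApprox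
variable {n : ℕ}

set_option maxHeartbeats 1000000 in
lemma net_approx (hn : 0 < n) (N : Matrix (Fin n) (Fin n) ℝ)
    (hNsym : ∀ i j, N j i = N i j) :
    ∃ x : Fin n → ℝ,
      (∀ i, ∃ k : ℤ, k ∈ Finset.Icc (-(⌈8 * Real.sqrt n⌉)) ⌈8 * Real.sqrt n⌉ ∧
        x i = (k:ℝ)/(8 * Real.sqrt n)) ∧
      (∑ i, x i ^ 2 ≤ 81/64) ∧
      (47/64) * specNorm N ≤
        |∑ q : {q : Fin n × Fin n // q.1 ≤ q.2}, wt x q.1 * N q.1.1 q.1.2| := by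
  have hnR : (1:ℝ) ≤ (n:ℝ) := by exact_mod_cast hn
  have hsqpos : 0 < Real.sqrt n := Real.sqrt_pos.2 (by linarith)
  set d : ℝ := 8 * Real.sqrt n with hd_def
  have hd : 0 < d := by positivity
  have hherm : N.IsHermitian := by
    ext i j
    simp [Matrix.conjTranspose_apply, hNsym]
  obtain ⟨v, hv1, hvspec⟩ := spec_exists_unit hn N hherm
  set vx : Fin n → ℝ := WithLp.equiv 2 (Fin n → ℝ) v with hvx_def
  have hvinv : (WithLp.equiv 2 (Fin n → ℝ)).symm vx = v := Equiv.symm_apply_apply _ v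
  have hvsum : ∑ i, vx i ^ 2 = 1 := by
    have h1 : ‖v‖ = Real.sqrt (∑ i, vx i ^ 2) := by rw [← hvinv, euc_norm_eq]
    rw [hv1] at h1
    have := Real.sq_sqrt (show (0:ℝ) ≤ ∑ i, vx i ^ 2 by positivity)
    rw [← h1] at this
    linarith
  have hvle : ∀ i, |vx i| ≤ 1 := by
    intro i
    have h1 : vx i ^ 2 ≤ 1 := by
      rw [← hvsum]
      exact Finset.single_le_sum (fun j _ => sq_nonneg (vx j)) (Finset.mem_univ i)
    nlinarith [abs_nonneg (vx i), sq_abs (vx i)]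
  -- rounding
  set x : Fin n → ℝ := fun i => ((⌊vx i * d⌋ : ℤ) : ℝ) / d with hx_def
  have herr : ∀ i, 0 ≤ vx i - x i ∧ vx i - x i ≤ 1/d := by
    intro i
    constructor
    · rw [hx_def]
      have := Int.floor_le (vx i * d)
      rw [sub_nonneg, div_le_iff₀ hd]
      linarith
    · rw [hx_def]
      have := Int.lt_floor_add_one (vx i * d)
      rw [sub_le_iff_le_add, ← add_div, le_div_iff₀ hd]
      linarith
  refine ⟨x, ?_, ?_, ?_⟩
  · -- grid membership
    intro i
    refine ⟨⌊vx i * d⌋, ?_, rfl⟩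
    rw [Finset.mem_Icc]
    constructor
    · apply Int.le_floor.2
      push_cast
      have h1 : -d ≤ vx i * d := by
        have := (abs_le.1 (hvle i)).1
        nlinarith
      have := Int.le_ceil d
      linarith
    · have h1 : vx i * d ≤ d := by
        have := (abs_le.1 (hvle i)).2
        nlinarith
      calc ⌊vx i * d⌋ ≤ ⌊d⌋ := Int.floor_le_floor h1
        _ ≤ ⌈d⌉ := Int.floor_le_ceil d
  · -- norm bound
    have hxb : ∀ i, x i ^ 2 ≤ (|vx i| + 1/d) ^ 2 := by
      intro i
      have h1 := (herr i).1
      have h2 := (herr i).2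
      have h3 : |x i| ≤ |vx i| + 1/d := by
        rw [abs_le]
        constructor
        · have := abs_le.1 (hvle i)
          nlinarith [(abs_le.1 (hvle i)).1, abs_nonneg (vx i), neg_abs_le (vx i)]
        · nlinarith [le_abs_self (vx i)]
      nlinarith [abs_nonneg (x i), sq_abs (x i)]
    clear hxb
    have hsub : v - (WithLp.equiv 2 (Fin n → ℝ)).symm x
        = (WithLp.equiv 2 (Fin n → ℝ)).symm (fun i => vx i - x i) := by
      rw [← hvinv]
      rfl
    have hdiff : ‖v - (WithLp.equiv 2 (Fin n → ℝ)).symm x‖ ≤ 1/8 := by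
      rw [hsub, euc_norm_eq]
      have hsum : ∑ i, (vx i - x i)^2 ≤ (n:ℝ) * (1/d)^2 := by
        calc ∑ i, (vx i - x i)^2 ≤ ∑ _i : Fin n, (1/d)^2 := by
              apply Finset.sum_le_sum
              intro i _
              have h1 := (herr i).1
              have h2 := (herr i).2
              nlinarith
          _ = (n:ℝ) * (1/d)^2 := by
              rw [Finset.sum_const, Finset.card_univ, Fintype.card_fin, nsmul_eq_mul]
      calc Real.sqrt (∑ i, (vx i - x i)^2) ≤ Real.sqrt ((n:ℝ) * (1/d)^2) :=
            Real.sqrt_le_sqrt hsum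
        _ = 1/8 := by
            rw [show (n:ℝ) * (1/d)^2 = (Real.sqrt n * (1/d))^2 by
              rw [mul_pow, Real.sq_sqrt (by positivity)]]
            rw [Real.sqrt_sq (by positivity), hd_def]
            field_simp
    have hexnorm : ‖(WithLp.equiv 2 (Fin n → ℝ)).symm x‖ ≤ 9/8 := by
      have h1 : (WithLp.equiv 2 (Fin n → ℝ)).symm x
          = v - (v - (WithLp.equiv 2 (Fin n → ℝ)).symm x) := by abel
      rw [h1]
      calc ‖v - (v - (WithLp.equiv 2 (Fin n → ℝ)).symm x)‖
          ≤ ‖v‖ + ‖v - (WithLp.equiv 2 (Fin n → ℝ)).symm x‖ := norm_sub_le _ _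
        _ ≤ 1 + 1/8 := by rw [hv1]; linarith
        _ = 9/8 := by norm_num
    have h2 : Real.sqrt (∑ i, x i ^ 2) ≤ 9/8 := by
      rw [← euc_norm_eq]
      exact hexnorm
    have h3 := Real.sq_sqrt (show (0:ℝ) ≤ ∑ i, x i ^ 2 by positivity)
    nlinarith [Real.sqrt_nonneg (∑ i, x i ^ 2)]
  · -- main spectral estimate
    have hsub : v - (WithLp.equiv 2 (Fin n → ℝ)).symm x
        = (WithLp.equiv 2 (Fin n → ℝ)).symm (fun i => vx i - x i) := by
      rw [← hvinv]
      rfl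
    have hdiff : ‖v - (WithLp.equiv 2 (Fin n → ℝ)).symm x‖ ≤ 1/8 := by
      rw [hsub, euc_norm_eq]
      have hsum : ∑ i, (vx i - x i)^2 ≤ (n:ℝ) * (1/d)^2 := by
        calc ∑ i, (vx i - x i)^2 ≤ ∑ _i : Fin n, (1/d)^2 := by
              apply Finset.sum_le_sum
              intro i _
              have h1 := (herr i).1
              have h2 := (herr i).2
              nlinarith
          _ = (n:ℝ) * (1/d)^2 := by
              rw [Finset.sum_const, Finset.card_univ, Fintype.card_fin, nsmul_eq_mul]
      calc Real.sqrt (∑ i, (vx i - x i)^2) ≤ Real.sqrt ((n:ℝ) * (1/d)^2) :=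
            Real.sqrt_le_sqrt hsum
        _ = 1/8 := by
            rw [show (n:ℝ) * (1/d)^2 = (Real.sqrt n * (1/d))^2 by
              rw [mul_pow, Real.sq_sqrt (by positivity)]]
            rw [Real.sqrt_sq (by positivity), hd_def]
            field_simp
    have hexnorm : ‖(WithLp.equiv 2 (Fin n → ℝ)).symm x‖ ≤ 9/8 := by
      have h1 : (WithLp.equiv 2 (Fin n → ℝ)).symm x
          = v - (v - (WithLp.equiv 2 (Fin n → ℝ)).symm x) := by abel
      rw [h1]
      calc ‖v - (v - (WithLp.equiv 2 (Fin n → ℝ)).symm x)‖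
          ≤ ‖v‖ + ‖v - (WithLp.equiv 2 (Fin n → ℝ)).symm x‖ := norm_sub_le _ _
        _ ≤ 1 + 1/8 := by rw [hv1]; linarith
        _ = 9/8 := by norm_num
    set ex := (WithLp.equiv 2 (Fin n → ℝ)).symm x with hex_def
    set T := Matrix.toEuclideanLin N with hT_def
    set S := specNorm N with hS_def
    have hS0 : 0 ≤ S := norm_nonneg _
    have h_id : (inner ℝ v (T v) : ℝ) - inner ℝ ex (T ex)
        = (inner ℝ (v - ex) (T v) : ℝ) + inner ℝ ex (T (v - ex)) := by
      rw [inner_sub_left, map_sub, inner_sub_right]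
      ring
    have hb1 : |(inner ℝ (v - ex) (T v) : ℝ)| ≤ (1/8) * S := by
      calc |(inner ℝ (v - ex) (T v) : ℝ)| ≤ ‖v - ex‖ * ‖T v‖ := abs_real_inner_le_norm _ _
        _ ≤ (1/8) * (S * 1) := by
            apply mul_le_mul hdiff _ (norm_nonneg _) (by norm_num)
            have := norm_toEuclideanLin_le N v
            rw [hv1] at this
            simpa using this
        _ = (1/8) * S := by ring
    have hb2 : |(inner ℝ ex (T (v - ex)) : ℝ)| ≤ (9/8) * (S * (1/8)) := by
      calc |(inner ℝ ex (T (v - ex)) : ℝ)| ≤ ‖ex‖ * ‖T (v - ex)‖ := abs_real_inner_le_norm _ _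
        _ ≤ (9/8) * (S * (1/8)) := by
            apply mul_le_mul hexnorm _ (norm_nonneg _) (by norm_num)
            calc ‖T (v - ex)‖ ≤ S * ‖v - ex‖ := norm_toEuclideanLin_le N _
              _ ≤ S * (1/8) := mul_le_mul_of_nonneg_left hdiff hS0
    have hquad : (inner ℝ ex (T ex) : ℝ)
        = ∑ q : {q : Fin n × Fin n // q.1 ≤ q.2}, wt x q.1 * N q.1.1 q.1.2 :=
      quad_form_eq N hNsym x
    rw [← hquad]
    have habs : |(inner ℝ v (T v) : ℝ)| - |(inner ℝ ex (T ex) : ℝ)|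
        ≤ |(inner ℝ v (T v) : ℝ) - inner ℝ ex (T ex)| := abs_sub_abs_le_abs_sub _ _
    have hid2 : |(inner ℝ v (T v) : ℝ) - inner ℝ ex (T ex)| ≤ (17/64) * S := by
      rw [h_id]
      calc |(inner ℝ (v - ex) (T v) : ℝ) + inner ℝ ex (T (v - ex))|
          ≤ |(inner ℝ (v - ex) (T v) : ℝ)| + |(inner ℝ ex (T (v - ex)) : ℝ)| := abs_add_le _ _
        _ ≤ (1/8) * S + (9/8) * (S * (1/8)) := add_le_add hb1 hb2
        _ = (17/64) * S := by ring
    linarith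

end NetApprox
end Aux


set_option maxHeartbeats 4000000 in
/-- for a random symmetric matrix with independent Bernoulli entries of
means `R_ij`, the spectral norm of `A − R` exceeds `3√(n log n)` with probability at
most `2/n²`. -/
theorem bernoulli_matrix_spectral_norm_concentration
    (n : ℕ) (hn : 2 ≤ n)
    {Ω : Type*} [MeasurableSpace Ω] (P : Measure Ω) [IsProbabilityMeasure P]
    (A : Ω → Matrix (Fin n) (Fin n) ℝ)
    (R : Matrix (Fin n) (Fin n) ℝ)
    (hR01 : ∀ i j, 0 ≤ R i j ∧ R i j ≤ 1)
    (hsym : ∀ ω i j, A ω j i = A ω i j)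
    (h01 : ∀ ω i j, A ω i j = 0 ∨ A ω i j = 1)
    (hmeas : ∀ i j, Measurable fun ω => A ω i j)
    (hmean : ∀ i j, P {ω | A ω i j = 1} = ENNReal.ofReal (R i j))
    (hindep : iIndepFun
      (fun (x : {x : Fin n × Fin n // x.1 ≤ x.2}) ω => A ω x.1.1 x.1.2) P) :
    P {ω | 3 * Real.sqrt ((n : ℝ) * Real.log n) ≤ specNorm (A ω - R)} ≤
      ENNReal.ofReal (2 / (n : ℝ) ^ 2) := by
  classical
  set L : ℝ := Real.log n with hL_def
  have hn1 : (1:ℝ) ≤ (n:ℝ) := by exact_mod_cast Nat.one_le_of_lt hn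
  have hL0 : 0 ≤ L := Real.log_nonneg hn1
  set t0 : ℝ := 3 * Real.sqrt ((n : ℝ) * L) with ht0_def
  have ht00 : 0 ≤ t0 := by positivity
  -- symmetry of R
  have hRsym : ∀ i j, R j i = R i j := by
    intro i j
    have h1 : {ω | A ω j i = 1} = {ω | A ω i j = 1} := by
      ext ω; simp [hsym ω i j]
    have h2 := hmean j i
    rw [h1, hmean i j] at h2
    exact ((ENNReal.ofReal_eq_ofReal_iff (hR01 i j).1 (hR01 j i).1).1 h2).symm
  have hMsym : ∀ ω i j, (A ω - R) j i = (A ω - R) i j := by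
    intro ω i j
    rw [Matrix.sub_apply, Matrix.sub_apply, hsym ω i j, hRsym i j]
  have hent : ∀ ω i j, |(A ω - R) i j| ≤ 1 := by
    intro ω i j
    rw [Matrix.sub_apply, abs_le]
    rcases h01 ω i j with h | h <;> rw [h] <;>
      exact ⟨by linarith [(hR01 i j).2], by linarith [(hR01 i j).1]⟩
  by_cases hsmall : n ≤ 30
  · -- deterministic regime : event is empty
    have hEmpty : {ω | t0 ≤ specNorm (A ω - R)} = ∅ := by
      ext ω
      simp only [Set.mem_setOf_eq, Set.mem_empty_iff_false, iff_false, not_le]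
      have hb := specNorm_le_card (A ω - R) (hent ω)
      have h9 := nine_log n hn hsmall
      have ht0 : (n:ℝ) < t0 := by
        rw [ht0_def]
        have h3 : (n:ℝ)/3 < Real.sqrt ((n:ℝ) * L) := by
          rw [← hL_def] at h9
          have := (Real.lt_sqrt (by positivity : (0:ℝ) ≤ (n:ℝ)/3)).2
            (show ((n:ℝ)/3)^2 < (n:ℝ) * L by nlinarith)
          exact this
        linarith
      linarith
    rw [hEmpty]
    simp only [measure_empty]
    exact zero_le
  · -- probabilistic regime
    have hbig : 31 ≤ n := by omega
    have hn0 : 0 < n := by omega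
    set d : ℝ := 8 * Real.sqrt n with hd_def
    have hsqpos : 0 < Real.sqrt n := Real.sqrt_pos.2 (by linarith)
    have hd : 0 < d := by positivity
    set m : ℤ := ⌈d⌉ with hm_def
    have hm0 : 0 ≤ m := Int.ceil_nonneg hd.le
    set grid : Finset ℝ := (Finset.Icc (-m) m).image (fun k : ℤ => (k:ℝ)/d) with hgrid_def
    set K : Finset (Fin n → ℝ) :=
      (Fintype.piFinset fun _ : Fin n => grid).filter (fun x => ∑ i, x i ^ 2 ≤ 81/64)
      with hK_def
    set s : ℝ := (47/64) * t0 with hs_def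
    have hs0 : 0 ≤ s := by rw [hs_def]; positivity
    set ex : ℝ := Real.exp (-(2 * s ^ 2 / (6561/2048))) with hex_def
    have hex0 : 0 ≤ ex := (Real.exp_pos _).le
    -- event inclusion
    set U : (Fin n → ℝ) → Set Ω := fun x =>
      ({ω | s ≤ ∑ q : {q : Fin n × Fin n // q.1 ≤ q.2},
          wt x q.1 * (A ω q.1.1 q.1.2 - R q.1.1 q.1.2)} ∪
        {ω | s ≤ ∑ q : {q : Fin n × Fin n // q.1 ≤ q.2},
          (-wt x q.1) * (A ω q.1.1 q.1.2 - R q.1.1 q.1.2)}) with hU_def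
    have hsubset : {ω | t0 ≤ specNorm (A ω - R)} ⊆ ⋃ x ∈ K, U x := by
      intro ω hω
      simp only [Set.mem_setOf_eq] at hω
      obtain ⟨x, hgridm, hx2, hxq⟩ := net_approx hn0 (A ω - R) (hMsym ω)
      have hxK : x ∈ K := by
        rw [hK_def, Finset.mem_filter]
        refine ⟨?_, hx2⟩
        rw [Fintype.mem_piFinset]
        intro i
        obtain ⟨k, hk, hkx⟩ := hgridm i
        rw [hgrid_def]
        exact Finset.mem_image.2 ⟨k, hk, hkx.symm⟩
      have hQ : (∑ q : {q : Fin n × Fin n // q.1 ≤ q.2}, wt x q.1 * (A ω - R) q.1.1 q.1.2)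
          = ∑ q : {q : Fin n × Fin n // q.1 ≤ q.2},
              wt x q.1 * (A ω q.1.1 q.1.2 - R q.1.1 q.1.2) := by
        exact Finset.sum_congr rfl (fun q _ => by rw [Matrix.sub_apply])
      have habs : s ≤ |∑ q : {q : Fin n × Fin n // q.1 ≤ q.2},
          wt x q.1 * (A ω q.1.1 q.1.2 - R q.1.1 q.1.2)| := by
        rw [← hQ]
        calc s = (47/64) * t0 := hs_def
          _ ≤ (47/64) * specNorm (A ω - R) := by linarith
          _ ≤ _ := hxq
      simp only [Set.mem_iUnion, hU_def]
      refine ⟨x, hxK, ?_⟩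
      rcases le_abs.1 habs with h | h
      · exact Or.inl h
      · refine Or.inr ?_
        simp only [Set.mem_setOf_eq, neg_mul]
        rw [← Finset.sum_neg_distrib] at h
        calc s ≤ ∑ q : {q : Fin n × Fin n // q.1 ≤ q.2},
              -(wt x q.1 * (A ω q.1.1 q.1.2 - R q.1.1 q.1.2)) := h
          _ = _ := Finset.sum_congr rfl (fun q _ => by ring)
    -- per-point bounds
    have hpoint : ∀ x ∈ K, P (U x) ≤ ENNReal.ofReal ex + ENNReal.ofReal ex := by
      intro x hxK
      have hx2 : ∑ i, x i ^ 2 ≤ 81/64 := (Finset.mem_filter.1 hxK).2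
      have hx2' : (0:ℝ) ≤ ∑ i, x i ^ 2 := by positivity
      have hwt2 : ∑ q : {q : Fin n × Fin n // q.1 ≤ q.2}, (wt x q.1) ^ 2 ≤ 6561/2048 := by
        calc ∑ q : {q : Fin n × Fin n // q.1 ≤ q.2}, (wt x q.1) ^ 2
            ≤ 2 * (∑ i, x i ^ 2) ^ 2 := wt_sq_le x
          _ ≤ 6561/2048 := by nlinarith
      have hindep1 : iIndepFun
          (fun (q : {q : Fin n × Fin n // q.1 ≤ q.2}) ω =>
            wt x q.1 * (A ω q.1.1 q.1.2 - R q.1.1 q.1.2)) P := by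
        have h := hindep.comp
          (fun (q : {q : Fin n × Fin n // q.1 ≤ q.2}) (a : ℝ) =>
            wt x q.1 * (a - R q.1.1 q.1.2))
          (fun q => (measurable_id.sub_const _).const_mul _)
        exact h
      have hindep2 : iIndepFun
          (fun (q : {q : Fin n × Fin n // q.1 ≤ q.2}) ω =>
            (-wt x q.1) * (A ω q.1.1 q.1.2 - R q.1.1 q.1.2)) P := by
        have h := hindep.comp
          (fun (q : {q : Fin n × Fin n // q.1 ≤ q.2}) (a : ℝ) =>
            (-wt x q.1) * (a - R q.1.1 q.1.2))
          (fun q => (measurable_id.sub_const _).const_mul _)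
        exact h
      have hmeas1 : ∀ q : {q : Fin n × Fin n // q.1 ≤ q.2},
          Measurable (fun ω => wt x q.1 * (A ω q.1.1 q.1.2 - R q.1.1 q.1.2)) :=
        fun q => ((hmeas _ _).sub_const _).const_mul _
      have hmeas2 : ∀ q : {q : Fin n × Fin n // q.1 ≤ q.2},
          Measurable (fun ω => (-wt x q.1) * (A ω q.1.1 q.1.2 - R q.1.1 q.1.2)) :=
        fun q => ((hmeas _ _).sub_const _).const_mul _
      have hmgf1 : ∀ (q : {q : Fin n × Fin n // q.1 ≤ q.2}) (t : ℝ),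
          Integrable (fun ω => Real.exp
            (t * (wt x q.1 * (A ω q.1.1 q.1.2 - R q.1.1 q.1.2)))) P ∧
          mgf (fun ω => wt x q.1 * (A ω q.1.1 q.1.2 - R q.1.1 q.1.2)) P t
            ≤ Real.exp ((wt x q.1 * t) ^ 2 / 8) :=
        fun q t => bern_scaled_mgf (fun ω => A ω q.1.1 q.1.2) (hmeas _ _)
          (fun ω => h01 ω _ _) (hR01 _ _).1 (hR01 _ _).2 (hmean _ _) (wt x q.1) t
      have hmgf2 : ∀ (q : {q : Fin n × Fin n // q.1 ≤ q.2}) (t : ℝ),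
          Integrable (fun ω => Real.exp
            (t * ((-wt x q.1) * (A ω q.1.1 q.1.2 - R q.1.1 q.1.2)))) P ∧
          mgf (fun ω => (-wt x q.1) * (A ω q.1.1 q.1.2 - R q.1.1 q.1.2)) P t
            ≤ Real.exp (((-wt x q.1) * t) ^ 2 / 8) :=
        fun q t => bern_scaled_mgf (fun ω => A ω q.1.1 q.1.2) (hmeas _ _)
          (fun ω => h01 ω _ _) (hR01 _ _).1 (hR01 _ _).2 (hmean _ _) (-wt x q.1) t
      have hwt2' : ∑ q : {q : Fin n × Fin n // q.1 ≤ q.2}, (-wt x q.1) ^ 2 ≤ 6561/2048 := by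
        calc ∑ q : {q : Fin n × Fin n // q.1 ≤ q.2}, (-wt x q.1) ^ 2
            = ∑ q : {q : Fin n × Fin n // q.1 ≤ q.2}, (wt x q.1) ^ 2 :=
              Finset.sum_congr rfl (fun q _ => by ring)
          _ ≤ 6561/2048 := hwt2
      have h1 := chernoff_sum (P := P)
        (fun (q : {q : Fin n × Fin n // q.1 ≤ q.2}) ω =>
          wt x q.1 * (A ω q.1.1 q.1.2 - R q.1.1 q.1.2))
        (fun q => wt x q.1) hindep1 hmeas1 hmgf1 (by norm_num : (0:ℝ) < 6561/2048) hwt2 hs0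
      have h2 := chernoff_sum (P := P)
        (fun (q : {q : Fin n × Fin n // q.1 ≤ q.2}) ω =>
          (-wt x q.1) * (A ω q.1.1 q.1.2 - R q.1.1 q.1.2))
        (fun q => -wt x q.1) hindep2 hmeas2 hmgf2 (by norm_num : (0:ℝ) < 6561/2048) hwt2' hs0
      rw [hU_def]
      refine le_trans (measure_union_le _ _) (add_le_add h1 h2)
    -- combine
    have hPE : P {ω | t0 ≤ specNorm (A ω - R)}
        ≤ (K.card : ENNReal) * (ENNReal.ofReal ex + ENNReal.ofReal ex) := by
      refine le_trans (measure_mono hsubset) (le_trans (measure_biUnion_finset_le K U) ?_)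
      calc ∑ x ∈ K, P (U x)
          ≤ ∑ _x ∈ K, (ENNReal.ofReal ex + ENNReal.ofReal ex) := Finset.sum_le_sum hpoint
        _ = (K.card : ENNReal) * (ENNReal.ofReal ex + ENNReal.ofReal ex) := by
            rw [Finset.sum_const, nsmul_eq_mul]
    -- cardinality bound
    have hcard : (K.card : ℝ) ≤ ((2 * m + 1 : ℤ) : ℝ) ^ n := by
      have h1 : K.card ≤ (Fintype.piFinset fun _ : Fin n => grid).card :=
        Finset.card_filter_le _ _
      have h2 : (Fintype.piFinset fun _ : Fin n => grid).card = grid.card ^ n := by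
        rw [Fintype.card_piFinset]
        simp
      have h3 : grid.card ≤ (2 * m + 1).toNat := by
        rw [hgrid_def]
        calc ((Finset.Icc (-m) m).image (fun k : ℤ => (k:ℝ)/d)).card
            ≤ (Finset.Icc (-m) m).card := Finset.card_image_le
          _ = (m + 1 - (-m)).toNat := Int.card_Icc _ _
          _ = (2 * m + 1).toNat := by congr 1; ring
      have h4 : K.card ≤ (2 * m + 1).toNat ^ n := by
        calc K.card ≤ grid.card ^ n := h2 ▸ h1
          _ ≤ (2 * m + 1).toNat ^ n := Nat.pow_le_pow_left h3 n
      have h5 : (((2 * m + 1).toNat : ℕ) : ℝ) = ((2 * m + 1 : ℤ) : ℝ) := by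
        rw [← Int.cast_natCast, Int.toNat_of_nonneg (by omega)]
      calc (K.card : ℝ) ≤ (((2 * m + 1).toNat ^ n : ℕ) : ℝ) := by exact_mod_cast h4
        _ = ((2 * m + 1 : ℤ) : ℝ) ^ n := by rw [Nat.cast_pow, h5]
    -- exponent identity
    have hexeq : ex = Real.exp (-((19881/6561) * ((n:ℝ) * L))) := by
      rw [hex_def]
      congr 1
      have h1 : Real.sqrt ((n:ℝ) * L) ^ 2 = (n:ℝ) * L :=
        Real.sq_sqrt (by positivity)
      rw [hs_def, ht0_def]
      rw [show ((47:ℝ)/64 * (3 * Real.sqrt ((n:ℝ) * L))) ^ 2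
        = (141/64)^2 * Real.sqrt ((n:ℝ) * L) ^ 2 by ring]
      rw [h1]
      ring
    -- final numeric bound
    have hfinal : (K.card : ℝ) * (2 * ex) ≤ 2 / (n:ℝ)^2 := by
      have hnum := final_num n hbig
      rw [← hL_def] at hnum
      have hpow0 : (0:ℝ) ≤ ((2 * m + 1 : ℤ) : ℝ) ^ n := by positivity
      have hKex : (K.card : ℝ) * ex ≤ ((2 * m + 1 : ℤ) : ℝ) ^ n
          * Real.exp (-((19881/6561) * ((n:ℝ) * L))) := by
        rw [hexeq]
        exact mul_le_mul_of_nonneg_right hcard (Real.exp_pos _).le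
      have hmatch : ((2 * m + 1 : ℤ) : ℝ) ^ n
          = ((2 * (⌈8 * Real.sqrt n⌉ : ℤ) + 1 : ℝ)) ^ n := by
        rw [hm_def, hd_def]
        push_cast
        ring
      rw [hmatch] at hKex
      have := le_trans hKex hnum
      calc (K.card : ℝ) * (2 * ex) = 2 * ((K.card : ℝ) * ex) := by ring
        _ ≤ 2 * (1 / (n:ℝ)^2) := by linarith
        _ = 2 / (n:ℝ)^2 := by ring
    -- put together
    calc P {ω | t0 ≤ specNorm (A ω - R)}
        ≤ (K.card : ENNReal) * (ENNReal.ofReal ex + ENNReal.ofReal ex) := hPE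
      _ = ENNReal.ofReal ((K.card : ℝ) * (2 * ex)) := by
          rw [← ENNReal.ofReal_add hex0 hex0, ← ENNReal.ofReal_natCast K.card,
            ← ENNReal.ofReal_mul (by positivity)]
          congr 1
          ring
      _ ≤ ENNReal.ofReal (2 / (n:ℝ)^2) := ENNReal.ofReal_le_ofReal hfinal
end

section
/- Consider the Elite–Grassroots model with m = 2 groups of sizes n₁ ≠ n₂, probabilities 0 < p, q < 1 with p ≠ q, and a positive weight function φ satisfying Properties 1–2. For each α ∈ ℝ let λ₂(α) = n₁ p φ(α,d₁*) / (n₁ p φ(α,d₁*) + n₂ q φ(α,d₂*)) − n₁ q φ(α,d₁*) / (n₁ q φ(α,d₁*) + n₂ p φ(α,d₂*)) be the second-largest-in-magnitude eigenvalue of T*(α), where d₁* = n₁p + n₂q > d₂* = n₁q + n₂p (assume n₁ > n₂ if p > q, or n₁ < n₂ if p < q, so that d₁* > d₂*). Then lim_{α→∞} |λ₂(α)| = 0 and lim_{α→−∞} |λ₂(α)| = 0. -/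
open Filter

/-- Property 1 of a weight function. -/
structure Property1 (φ : ℝ → ℝ → ℝ) : Prop where
  smooth : ContDiffOn ℝ 2 (fun x : ℝ × ℝ => φ x.1 x.2) (Set.univ ×ˢ Set.Ici (0 : ℝ))
  pos : ∀ a d : ℝ, 0 ≤ d → 0 < φ a d
  eq_one : ∀ d : ℝ, 0 ≤ d → φ 0 d = 1
  mono_alpha : ∀ d : ℝ, 0 ≤ d → Monotone fun a => φ a d
  mono_d : ∀ a : ℝ, 0 < a → MonotoneOn (φ a) (Set.Ici 0)
  anti_d : ∀ a : ℝ, a < 0 → AntitoneOn (φ a) (Set.Ici 0)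

/-- Property 2 of a weight function. -/
structure Property2 (φ : ℝ → ℝ → ℝ) : Prop where
  ratio_strictAnti : ∀ d₁ d₂ : ℝ, 0 ≤ d₂ → d₂ < d₁ → StrictAnti fun a => φ a d₂ / φ a d₁
  ratio_tendsto_atTop : ∀ d₁ d₂ : ℝ, 0 ≤ d₂ → d₂ < d₁ →
    Tendsto (fun a => φ a d₂ / φ a d₁) atTop (nhds 0)
  ratio_tendsto_atBot : ∀ d₁ d₂ : ℝ, 0 ≤ d₂ → d₂ < d₁ →
    Tendsto (fun a => φ a d₁ / φ a d₂) atBot (nhds 0)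

/-- in the two-group Elite–Grassroots model (with `d₁* > d₂*`), the
magnitude of the explicit second eigenvalue `λ₂(α)` of `T*(α)` tends to `0` both as
`α → ∞` and as `α → −∞`. -/
theorem lambda2_vanishes_at_infinity
    (n₁ n₂ : ℕ) (hn₁ : 0 < n₁) (hn₂ : 0 < n₂) (hne : n₁ ≠ n₂)
    (p q : ℝ) (hp : 0 < p) (hp1 : p < 1) (hq : 0 < q) (hq1 : q < 1) (hpq : p ≠ q)
    (φ : ℝ → ℝ → ℝ) (h1 : Property1 φ) (h2 : Property2 φ)
    (d₁star d₂star : ℝ)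
    (hd₁ : d₁star = (n₁ : ℝ) * p + (n₂ : ℝ) * q)
    (hd₂ : d₂star = (n₁ : ℝ) * q + (n₂ : ℝ) * p)
    -- so that d₁* > d₂*
    (horder : (q < p ∧ n₂ < n₁) ∨ (p < q ∧ n₁ < n₂))
    (lam : ℝ → ℝ)
    (hlam : ∀ a : ℝ, lam a =
      (n₁ : ℝ) * p * φ a d₁star / ((n₁ : ℝ) * p * φ a d₁star + (n₂ : ℝ) * q * φ a d₂star) -
      (n₁ : ℝ) * q * φ a d₁star / ((n₁ : ℝ) * q * φ a d₁star + (n₂ : ℝ) * p * φ a d₂star)) :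
    Tendsto (fun a => |lam a|) atTop (nhds 0) ∧
    Tendsto (fun a => |lam a|) atBot (nhds 0) := by
  have hN₁ : (0:ℝ) < n₁ := by exact_mod_cast hn₁
  have hN₂ : (0:ℝ) < n₂ := by exact_mod_cast hn₂
  have hApos : (0:ℝ) < (n₁:ℝ) * p := mul_pos hN₁ hp
  have hBpos : (0:ℝ) < (n₂:ℝ) * q := mul_pos hN₂ hq
  have hCpos : (0:ℝ) < (n₁:ℝ) * q := mul_pos hN₁ hq
  have hDpos : (0:ℝ) < (n₂:ℝ) * p := mul_pos hN₂ hp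
  have hd₂nonneg : 0 ≤ d₂star := by rw [hd₂]; positivity
  have hdlt : d₂star < d₁star := by
    rw [hd₁, hd₂]
    rcases horder with ⟨hqp, hn⟩ | ⟨hpq', hn⟩
    · have hn' : (n₂:ℝ) < n₁ := by exact_mod_cast hn
      nlinarith
    · have hn' : (n₁:ℝ) < n₂ := by exact_mod_cast hn
      nlinarith
  have hφ₁ : ∀ a, 0 < φ a d₁star := fun a =>
    h1.pos a d₁star (le_of_lt (lt_of_le_of_lt hd₂nonneg hdlt))
  have hφ₂ : ∀ a, 0 < φ a d₂star := fun a => h1.pos a d₂star hd₂nonneg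
  have key_top : ∀ a : ℝ, lam a =
      (n₁:ℝ) * p / ((n₁:ℝ) * p + (n₂:ℝ) * q * (φ a d₂star / φ a d₁star)) -
      (n₁:ℝ) * q / ((n₁:ℝ) * q + (n₂:ℝ) * p * (φ a d₂star / φ a d₁star)) := by
    intro a
    have h1' : φ a d₁star ≠ 0 := (hφ₁ a).ne'
    have hden1 : (n₁:ℝ) * p * φ a d₁star + (n₂:ℝ) * q * φ a d₂star ≠ 0 :=
      (add_pos (mul_pos hApos (hφ₁ a)) (mul_pos hBpos (hφ₂ a))).ne'
    have hden2 : (n₁:ℝ) * q * φ a d₁star + (n₂:ℝ) * p * φ a d₂star ≠ 0 :=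
      (add_pos (mul_pos hCpos (hφ₁ a)) (mul_pos hDpos (hφ₂ a))).ne'
    have hden3 : (n₁:ℝ) * p + (n₂:ℝ) * q * (φ a d₂star / φ a d₁star) ≠ 0 :=
      (add_pos hApos (mul_pos hBpos (div_pos (hφ₂ a) (hφ₁ a)))).ne'
    have hden4 : (n₁:ℝ) * q + (n₂:ℝ) * p * (φ a d₂star / φ a d₁star) ≠ 0 :=
      (add_pos hCpos (mul_pos hDpos (div_pos (hφ₂ a) (hφ₁ a)))).ne'
    rw [hlam a]
    field_simp
  have key_bot : ∀ a : ℝ, lam a =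
      (n₁:ℝ) * p * (φ a d₁star / φ a d₂star) /
        ((n₁:ℝ) * p * (φ a d₁star / φ a d₂star) + (n₂:ℝ) * q) -
      (n₁:ℝ) * q * (φ a d₁star / φ a d₂star) /
        ((n₁:ℝ) * q * (φ a d₁star / φ a d₂star) + (n₂:ℝ) * p) := by
    intro a
    have h2' : φ a d₂star ≠ 0 := (hφ₂ a).ne'
    have hden1 : (n₁:ℝ) * p * φ a d₁star + (n₂:ℝ) * q * φ a d₂star ≠ 0 :=
      (add_pos (mul_pos hApos (hφ₁ a)) (mul_pos hBpos (hφ₂ a))).ne'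
    have hden2 : (n₁:ℝ) * q * φ a d₁star + (n₂:ℝ) * p * φ a d₂star ≠ 0 :=
      (add_pos (mul_pos hCpos (hφ₁ a)) (mul_pos hDpos (hφ₂ a))).ne'
    have hden3 : (n₁:ℝ) * p * (φ a d₁star / φ a d₂star) + (n₂:ℝ) * q ≠ 0 :=
      (add_pos (mul_pos hApos (div_pos (hφ₁ a) (hφ₂ a))) hBpos).ne'
    have hden4 : (n₁:ℝ) * q * (φ a d₁star / φ a d₂star) + (n₂:ℝ) * p ≠ 0 :=
      (add_pos (mul_pos hCpos (div_pos (hφ₁ a) (hφ₂ a))) hDpos).ne'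
    rw [hlam a]
    field_simp
  have hr_top := h2.ratio_tendsto_atTop d₁star d₂star hd₂nonneg hdlt
  have hr_bot := h2.ratio_tendsto_atBot d₁star d₂star hd₂nonneg hdlt
  have hlin : ∀ c e : ℝ, Tendsto (fun r : ℝ => c + e * r) (nhds 0) (nhds c) := by
    intro c e
    have hc : Continuous fun r : ℝ => c + e * r :=
      continuous_const.add (continuous_const.mul continuous_id)
    simpa using hc.tendsto 0
  have hf : Tendsto (fun r : ℝ =>
      (n₁:ℝ) * p / ((n₁:ℝ) * p + (n₂:ℝ) * q * r) -
      (n₁:ℝ) * q / ((n₁:ℝ) * q + (n₂:ℝ) * p * r)) (nhds 0) (nhds 0) := by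
    have t1 : Tendsto (fun r : ℝ => (n₁:ℝ) * p / ((n₁:ℝ) * p + (n₂:ℝ) * q * r))
        (nhds 0) (nhds ((n₁:ℝ) * p / ((n₁:ℝ) * p))) :=
      tendsto_const_nhds.div (hlin ((n₁:ℝ) * p) ((n₂:ℝ) * q)) hApos.ne'
    have t2 : Tendsto (fun r : ℝ => (n₁:ℝ) * q / ((n₁:ℝ) * q + (n₂:ℝ) * p * r))
        (nhds 0) (nhds ((n₁:ℝ) * q / ((n₁:ℝ) * q))) :=
      tendsto_const_nhds.div (hlin ((n₁:ℝ) * q) ((n₂:ℝ) * p)) hCpos.ne'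
    have := t1.sub t2
    simpa [div_self hApos.ne', div_self hCpos.ne'] using this
  have hlin2 : ∀ c e : ℝ, Tendsto (fun s : ℝ => c * s + e) (nhds 0) (nhds e) := by
    intro c e
    have hc : Continuous fun s : ℝ => c * s + e :=
      (continuous_const.mul continuous_id).add continuous_const
    simpa using hc.tendsto 0
  have hmul0 : ∀ c : ℝ, Tendsto (fun s : ℝ => c * s) (nhds 0) (nhds 0) := by
    intro c
    have hc : Continuous fun s : ℝ => c * s :=
      continuous_const.mul continuous_id
    simpa using hc.tendsto 0
  have hg : Tendsto (fun s : ℝ =>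
      (n₁:ℝ) * p * s / ((n₁:ℝ) * p * s + (n₂:ℝ) * q) -
      (n₁:ℝ) * q * s / ((n₁:ℝ) * q * s + (n₂:ℝ) * p)) (nhds 0) (nhds 0) := by
    have t1 : Tendsto (fun s : ℝ => (n₁:ℝ) * p * s / ((n₁:ℝ) * p * s + (n₂:ℝ) * q))
        (nhds 0) (nhds (0 / ((n₂:ℝ) * q))) :=
      (hmul0 ((n₁:ℝ) * p)).div (hlin2 ((n₁:ℝ) * p) ((n₂:ℝ) * q)) hBpos.ne'
    have t2 : Tendsto (fun s : ℝ => (n₁:ℝ) * q * s / ((n₁:ℝ) * q * s + (n₂:ℝ) * p))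
        (nhds 0) (nhds (0 / ((n₂:ℝ) * p))) :=
      (hmul0 ((n₁:ℝ) * q)).div (hlin2 ((n₁:ℝ) * q) ((n₂:ℝ) * p)) hDpos.ne'
    have := t1.sub t2
    simpa using this
  constructor
  · have h0 : Tendsto (fun a => lam a) atTop (nhds 0) :=
      (hf.comp hr_top).congr fun a => (key_top a).symm
    simpa using h0.abs
  · have h0 : Tendsto (fun a => lam a) atBot (nhds 0) :=
      (hg.comp hr_bot).congr fun a => (key_bot a).symm
    simpa using h0.abs
end
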